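/- arXiv:2507.00194 — 3 statements merged into one kernel-verified Lean document; each statement's English description precedes it below -/
import Mathlib

section
/- Let P be an algebra of S-probabilities and let P̄ be its 0,1-extension on S̄ (which is then an algebra of S̄-probabilities). Then any two elements of P have an infimum and a supremum in the poset (P, ≤) if and only if any two elements of P̄ have an infimum and a supremum in (P̄, ≤); moreover, P is a Boolean algebra of S-probabilities if and only if P̄ is a Boolean algebra of S̄-probabilities. -/
/-- An `S`-probability: a function `p : S → ℝ` with `0 ≤ p s ≤ 1` for all `s`. -/
def IsProb (S : Type*) (p : S → ℝ) : Prop := ∀ s, 0 ≤ p s ∧ p s ≤ 1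

/-- An algebra of `S`-probabilities: a set of `S`-probabilities containing the constant `0`,
closed under `p ↦ 1 - p`, and containing `p + q + r` for pairwise orthogonal `p, q, r`
(where `p ⊥ q` means `p ≤ 1 - q`). -/
def IsAlg (S : Type*) (P : Set (S → ℝ)) : Prop :=
  (∀ p ∈ P, IsProb S p) ∧
  (0 : S → ℝ) ∈ P ∧
  (∀ p ∈ P, 1 - p ∈ P) ∧
  ∀ p q r : S → ℝ, p ∈ P → q ∈ P → r ∈ P →
    p ≤ 1 - q → q ≤ 1 - r → r ≤ 1 - p → p + q + r ∈ P

/-- A function `p : S → ℝ` is varying if it is neither everywhere `≤ 1/2`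
nor everywhere `≥ 1/2`. -/
def Varying (S : Type*) (p : S → ℝ) : Prop :=
  ¬(∀ s, p s ≤ 1 / 2) ∧ ¬(∀ s, 1 / 2 ≤ p s)

/-- `m` is the infimum of `p` and `q` within the poset `(P, ≤)`. -/
def IsInfIn (S : Type*) (P : Set (S → ℝ)) (p q m : S → ℝ) : Prop :=
  m ∈ P ∧ m ≤ p ∧ m ≤ q ∧ ∀ u ∈ P, u ≤ p → u ≤ q → u ≤ m

/-- `j` is the supremum of `p` and `q` within the poset `(P, ≤)`. -/
def IsSupIn (S : Type*) (P : Set (S → ℝ)) (p q j : S → ℝ) : Prop :=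
  j ∈ P ∧ p ≤ j ∧ q ≤ j ∧ ∀ u ∈ P, p ≤ u → q ≤ u → j ≤ u

/-- A Boolean algebra of `S`-probabilities: an algebra of `S`-probabilities in which any two
elements have an infimum and a supremum within `(P, ≤)`, the resulting lattice is distributive,
and for every `p ∈ P` the infimum of `p` and `1 - p` is `0` and their supremum is `1`. -/
def IsBooleanAlg (S : Type*) (P : Set (S → ℝ)) : Prop :=
  IsAlg S P ∧
  (∀ p ∈ P, ∀ q ∈ P, (∃ m, IsInfIn S P p q m) ∧ (∃ j, IsSupIn S P p q j)) ∧
  (∀ p ∈ P, ∀ q ∈ P, ∀ r ∈ P, ∀ qr a pq pr b : S → ℝ,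
    IsSupIn S P q r qr → IsInfIn S P p qr a →
    IsInfIn S P p q pq → IsInfIn S P p r pr → IsSupIn S P pq pr b → a = b) ∧
  ∀ p ∈ P, IsInfIn S P p (1 - p) 0 ∧ IsSupIn S P p (1 - p) 1

/-- The extension `(p, c)` of `p : S → ℝ` to `S̄ = S ∪ {s̄}` (modelled as `Option S`,
with `none` playing the role of the new state `s̄`), taking the value `c` at `s̄`. -/
def extFun {S : Type*} (p : S → ℝ) (c : ℝ) : Option S → ℝ :=
  fun x => Option.elim x c p

/-- The `0,1`-extension `P̄ = {(p,0) : p ∈ P} ∪ {(p,1) : p ∈ P}` of a set `P` of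
`S`-probabilities. -/
def extSet {S : Type*} (P : Set (S → ℝ)) : Set (Option S → ℝ) :=
  {f | ∃ p ∈ P, f = extFun p 0 ∨ f = extFun p 1}

/-- `p` and `q` are partially reciprocal below `1/2`. -/
def PRBelow (S : Type*) (p q : S → ℝ) : Prop := ∀ s, min (p s) (q s) ≤ 1 / 2

/-- `p` and `q` are partially reciprocal above `1/2`. -/
def PRAbove (S : Type*) (p q : S → ℝ) : Prop := ∀ s, 1 / 2 ≤ max (p s) (q s)

/-- `p` and `q` are reciprocal. -/
def Reciprocal (S : Type*) (p q : S → ℝ) : Prop := PRBelow S p q ∧ PRAbove S p q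

/-- Two functions are incomparable in the pointwise order. -/
def Incomp {S : Type*} (a b : S → ℝ) : Prop := ¬a ≤ b ∧ ¬b ≤ a

/-- An algebra of `S`-probabilities of type `MO₂`,
with the six pairwise distinct elements `0, p₁, 1 - p₁, p₂, 1 - p₂, 1` such that
`p₁, 1 - p₁, p₂, 1 - p₂` are pairwise incomparable. -/
def IsMO2 (S : Type*) (P : Set (S → ℝ)) (p1 p2 : S → ℝ) : Prop :=
  IsAlg S P ∧
  P = {0, p1, 1 - p1, p2, 1 - p2, 1} ∧
  ([(0 : S → ℝ), p1, 1 - p1, p2, 1 - p2, 1].Pairwise (· ≠ ·)) ∧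
  Incomp p1 (1 - p1) ∧ Incomp p1 p2 ∧ Incomp p1 (1 - p2) ∧
  Incomp (1 - p1) p2 ∧ Incomp (1 - p1) (1 - p2) ∧ Incomp p2 (1 - p2)

/-- `f` is an atom of `P`: a minimal element of `P \ {0}`. -/
def IsAtomOf (S : Type*) (P : Set (S → ℝ)) (f : S → ℝ) : Prop :=
  f ∈ P ∧ f ≠ 0 ∧ ∀ g ∈ P, g ≠ 0 → g ≤ f → g = f

/-!
The map `(p, c) ↦ extFun p c` is an order isomorphism from the product poset `P × {0, 1}`
onto `P̄`. Infima and suprema in a product are computed coordinatewise,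
and the two-element chain `{0, 1}` is itself a Boolean algebra, so the existence of infima and
suprema, distributivity and complementation all pass from `P` to `P̄` and back.
-/

def HasInfSupIn (S : Type*) (P : Set (S → ℝ)) : Prop :=
  ∀ p ∈ P, ∀ q ∈ P, (∃ m, IsInfIn S P p q m) ∧ (∃ j, IsSupIn S P p q j)

def IsDistribIn (S : Type*) (P : Set (S → ℝ)) : Prop :=
  ∀ p ∈ P, ∀ q ∈ P, ∀ r ∈ P, ∀ qr a pq pr b : S → ℝ,
    IsSupIn S P q r qr → IsInfIn S P p qr a →
    IsInfIn S P p q pq → IsInfIn S P p r pr → IsSupIn S P pq pr b → a = b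

def IsComplementedIn (S : Type*) (P : Set (S → ℝ)) : Prop :=
  ∀ p ∈ P, IsInfIn S P p (1 - p) 0 ∧ IsSupIn S P p (1 - p) 1

local notation "𝔹" => ({0, 1} : Set ℝ)

section Bits

variable {a b c : ℝ}

theorem zero_mem_bits : (0 : ℝ) ∈ 𝔹 := Set.mem_insert 0 _

theorem one_mem_bits : (1 : ℝ) ∈ 𝔹 := Set.mem_insert_of_mem 0 rfl

theorem min_mem_bits (ha : a ∈ 𝔹) (hb : b ∈ 𝔹) : min a b ∈ 𝔹 := by
  rcases min_choice a b with h | h <;> rwa [h]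

theorem max_mem_bits (ha : a ∈ 𝔹) (hb : b ∈ 𝔹) : max a b ∈ 𝔹 := by
  rcases max_choice a b with h | h <;> rwa [h]

theorem one_sub_mem_bits (ha : a ∈ 𝔹) : 1 - a ∈ 𝔹 := by
  rcases ha with rfl | rfl <;> norm_num

theorem min_one_sub_of_mem_bits (ha : a ∈ 𝔹) : min a (1 - a) = 0 := by
  rcases ha with rfl | rfl <;> norm_num

theorem max_one_sub_of_mem_bits (ha : a ∈ 𝔹) : max a (1 - a) = 1 := by
  rcases ha with rfl | rfl <;> norm_num

theorem add_add_mem_bits (ha : a ∈ 𝔹) (hb : b ∈ 𝔹) (hc : c ∈ 𝔹)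
    (hab : a ≤ 1 - b) (hbc : b ≤ 1 - c) (hca : c ≤ 1 - a) : a + b + c ∈ 𝔹 := by
  rcases ha with rfl | rfl <;> rcases hb with rfl | rfl <;> rcases hc with rfl | rfl <;>
    norm_num at *

theorem nonneg_of_mem_bits (ha : a ∈ 𝔹) : 0 ≤ a := by
  rcases ha with rfl | rfl <;> norm_num

theorem le_one_of_mem_bits (ha : a ∈ 𝔹) : a ≤ 1 := by
  rcases ha with rfl | rfl <;> norm_num

end Bits

section Extension

variable {S : Type*} {P : Set (S → ℝ)} {p q m j : S → ℝ} {a b c : ℝ}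

theorem extFun_le_extFun_iff : extFun p a ≤ extFun q b ↔ p ≤ q ∧ a ≤ b :=
  Option.forall.trans and_comm

theorem extFun_inj : extFun p a = extFun q b ↔ p = q ∧ a = b := by
  simp only [le_antisymm_iff, extFun_le_extFun_iff]
  tauto

theorem one_sub_extFun : 1 - extFun p a = extFun (1 - p) (1 - a) := by
  funext x; cases x <;> rfl

theorem zero_eq_extFun : (0 : Option S → ℝ) = extFun 0 0 := by
  funext x; cases x <;> rfl

theorem one_eq_extFun : (1 : Option S → ℝ) = extFun 1 1 := by
  funext x; cases x <;> rfl

theorem extFun_add_add {r : S → ℝ} :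
    extFun p a + extFun q b + extFun r c = extFun (p + q + r) (a + b + c) := by
  funext x; cases x <;> rfl

theorem mem_extSet_iff {f : Option S → ℝ} :
    f ∈ extSet P ↔ ∃ p ∈ P, ∃ c ∈ 𝔹, f = extFun p c := by
  simp only [extSet, Set.mem_ofPred_eq, Set.mem_insert_iff, Set.mem_singleton_iff,
    exists_eq_or_imp, exists_eq_left]

theorem extFun_mem_extSet_iff : extFun p c ∈ extSet P ↔ p ∈ P ∧ c ∈ 𝔹 := by
  simp only [mem_extSet_iff, extFun_inj]
  constructor
  · rintro ⟨p, hp, c, hc, rfl, rfl⟩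
    exact ⟨hp, hc⟩
  · rintro ⟨hp, hc⟩
    exact ⟨p, hp, c, hc, rfl, rfl⟩

theorem isInfIn_extFun_iff (ha : a ∈ 𝔹) (hb : b ∈ 𝔹) :
    IsInfIn (Option S) (extSet P) (extFun p a) (extFun q b) (extFun m c) ↔
      IsInfIn S P p q m ∧ c = min a b := by
  simp only [IsInfIn, extFun_le_extFun_iff, extFun_mem_extSet_iff]
  constructor
  · rintro ⟨⟨hm, -⟩, ⟨hmp, hca⟩, ⟨hmq, hcb⟩, hgreatest⟩
    refine ⟨⟨hm, hmp, hmq, fun u hu hup huq => ?_⟩, ?_⟩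
    · exact (extFun_le_extFun_iff.1 <|
        hgreatest _ (extFun_mem_extSet_iff.2 ⟨hu, zero_mem_bits⟩)
        (extFun_le_extFun_iff.2 ⟨hup, nonneg_of_mem_bits ha⟩)
        (extFun_le_extFun_iff.2 ⟨huq, nonneg_of_mem_bits hb⟩)).1
    · refine le_antisymm (le_min hca hcb) ?_
      exact (extFun_le_extFun_iff.1 <|
        hgreatest _ (extFun_mem_extSet_iff.2 ⟨hm, min_mem_bits ha hb⟩)
        (extFun_le_extFun_iff.2 ⟨hmp, min_le_left a b⟩)
        (extFun_le_extFun_iff.2 ⟨hmq, min_le_right a b⟩)).2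
  · rintro ⟨⟨hm, hmp, hmq, hgreatest⟩, rfl⟩
    refine ⟨⟨hm, min_mem_bits ha hb⟩, ⟨hmp, min_le_left a b⟩, ⟨hmq, min_le_right a b⟩,
      fun u hu hup huq => ?_⟩
    obtain ⟨v, hv, e, -, rfl⟩ := mem_extSet_iff.1 hu
    rw [extFun_le_extFun_iff] at hup huq ⊢
    exact ⟨hgreatest v hv hup.1 huq.1, le_min hup.2 huq.2⟩

theorem isSupIn_extFun_iff (ha : a ∈ 𝔹) (hb : b ∈ 𝔹) :
    IsSupIn (Option S) (extSet P) (extFun p a) (extFun q b) (extFun j c) ↔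
      IsSupIn S P p q j ∧ c = max a b := by
  simp only [IsSupIn, extFun_le_extFun_iff, extFun_mem_extSet_iff]
  constructor
  · rintro ⟨⟨hj, -⟩, ⟨hpj, hac⟩, ⟨hqj, hbc⟩, hleast⟩
    refine ⟨⟨hj, hpj, hqj, fun u hu hpu hqu => ?_⟩, ?_⟩
    · exact (extFun_le_extFun_iff.1 <|
        hleast _ (extFun_mem_extSet_iff.2 ⟨hu, one_mem_bits⟩)
        (extFun_le_extFun_iff.2 ⟨hpu, le_one_of_mem_bits ha⟩)
        (extFun_le_extFun_iff.2 ⟨hqu, le_one_of_mem_bits hb⟩)).1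
    · refine le_antisymm ?_ (max_le hac hbc)
      exact (extFun_le_extFun_iff.1 <|
        hleast _ (extFun_mem_extSet_iff.2 ⟨hj, max_mem_bits ha hb⟩)
        (extFun_le_extFun_iff.2 ⟨hpj, le_max_left a b⟩)
        (extFun_le_extFun_iff.2 ⟨hqj, le_max_right a b⟩)).2
  · rintro ⟨⟨hj, hpj, hqj, hleast⟩, rfl⟩
    refine ⟨⟨hj, max_mem_bits ha hb⟩, ⟨hpj, le_max_left a b⟩, ⟨hqj, le_max_right a b⟩,
      fun u hu hpu hqu => ?_⟩
    obtain ⟨v, hv, e, -, rfl⟩ := mem_extSet_iff.1 hu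
    rw [extFun_le_extFun_iff] at hpu hqu ⊢
    exact ⟨hleast v hv hpu.1 hqu.1, max_le hpu.2 hqu.2⟩

theorem IsInfIn.extFun_zero (h : IsInfIn S P p q m) :
    IsInfIn (Option S) (extSet P) (extFun p 0) (extFun q 0) (extFun m 0) :=
  (isInfIn_extFun_iff zero_mem_bits zero_mem_bits).2 ⟨h, (min_self 0).symm⟩

theorem IsSupIn.extFun_zero (h : IsSupIn S P p q j) :
    IsSupIn (Option S) (extSet P) (extFun p 0) (extFun q 0) (extFun j 0) :=
  (isSupIn_extFun_iff zero_mem_bits zero_mem_bits).2 ⟨h, (max_self 0).symm⟩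

theorem IsAlg.extSet (hP : IsAlg S P) : IsAlg (Option S) (extSet P) := by
  obtain ⟨hprob, h0, hcompl, hsum⟩ := hP
  refine ⟨?_, ?_, ?_, ?_⟩
  · intro f hf
    obtain ⟨p, hp, c, hc, rfl⟩ := mem_extSet_iff.1 hf
    rintro (_ | s)
    · exact ⟨nonneg_of_mem_bits hc, le_one_of_mem_bits hc⟩
    · exact hprob p hp s
  · rw [zero_eq_extFun, extFun_mem_extSet_iff]
    exact ⟨h0, zero_mem_bits⟩
  · intro f hf
    obtain ⟨p, hp, c, hc, rfl⟩ := mem_extSet_iff.1 hf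
    rw [one_sub_extFun, extFun_mem_extSet_iff]
    exact ⟨hcompl p hp, one_sub_mem_bits hc⟩
  · intro f g h hf hg hh hfg hgh hhf
    obtain ⟨p, hp, a, ha, rfl⟩ := mem_extSet_iff.1 hf
    obtain ⟨q, hq, b, hb, rfl⟩ := mem_extSet_iff.1 hg
    obtain ⟨r, hr, c, hc, rfl⟩ := mem_extSet_iff.1 hh
    rw [one_sub_extFun, extFun_le_extFun_iff] at hfg hgh hhf
    rw [extFun_add_add, extFun_mem_extSet_iff]
    exact ⟨hsum p q r hp hq hr hfg.1 hgh.1 hhf.1,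
      add_add_mem_bits ha hb hc hfg.2 hgh.2 hhf.2⟩

theorem hasInfSupIn_extSet_iff : HasInfSupIn S P ↔ HasInfSupIn (Option S) (extSet P) := by
  constructor
  · intro h f hf g hg
    obtain ⟨p, hp, a, ha, rfl⟩ := mem_extSet_iff.1 hf
    obtain ⟨q, hq, b, hb, rfl⟩ := mem_extSet_iff.1 hg
    obtain ⟨⟨m, hm⟩, ⟨j, hj⟩⟩ := h p hp q hq
    exact ⟨⟨_, (isInfIn_extFun_iff ha hb).2 ⟨hm, rfl⟩⟩,
      ⟨_, (isSupIn_extFun_iff ha hb).2 ⟨hj, rfl⟩⟩⟩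
  · intro h p hp q hq
    obtain ⟨⟨M, hM⟩, ⟨J, hJ⟩⟩ := h _ (extFun_mem_extSet_iff.2 ⟨hp, zero_mem_bits⟩)
      _ (extFun_mem_extSet_iff.2 ⟨hq, zero_mem_bits⟩)
    obtain ⟨m, -, _, -, rfl⟩ := mem_extSet_iff.1 hM.1
    obtain ⟨j, -, _, -, rfl⟩ := mem_extSet_iff.1 hJ.1
    exact ⟨⟨m, ((isInfIn_extFun_iff zero_mem_bits zero_mem_bits).1 hM).1⟩,
      ⟨j, ((isSupIn_extFun_iff zero_mem_bits zero_mem_bits).1 hJ).1⟩⟩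

theorem isDistribIn_extSet_iff : IsDistribIn S P ↔ IsDistribIn (Option S) (extSet P) := by
  constructor
  · intro h f hf g hg k hk QR A PQ PR B hQR hA hPQ hPR hB
    obtain ⟨p, hp, e₁, he₁, rfl⟩ := mem_extSet_iff.1 hf
    obtain ⟨q, hq, e₂, he₂, rfl⟩ := mem_extSet_iff.1 hg
    obtain ⟨r, hr, e₃, he₃, rfl⟩ := mem_extSet_iff.1 hk
    obtain ⟨qr, -, _, -, rfl⟩ := mem_extSet_iff.1 hQR.1
    obtain ⟨a, -, _, -, rfl⟩ := mem_extSet_iff.1 hA.1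
    obtain ⟨pq, -, _, -, rfl⟩ := mem_extSet_iff.1 hPQ.1
    obtain ⟨pr, -, _, -, rfl⟩ := mem_extSet_iff.1 hPR.1
    obtain ⟨b, -, _, -, rfl⟩ := mem_extSet_iff.1 hB.1
    obtain ⟨hqr, rfl⟩ := (isSupIn_extFun_iff he₂ he₃).1 hQR
    obtain ⟨ha, rfl⟩ := (isInfIn_extFun_iff he₁ (max_mem_bits he₂ he₃)).1 hA
    obtain ⟨hpq, rfl⟩ := (isInfIn_extFun_iff he₁ he₂).1 hPQ
    obtain ⟨hpr, rfl⟩ := (isInfIn_extFun_iff he₁ he₃).1 hPR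
    obtain ⟨hb, rfl⟩ :=
      (isSupIn_extFun_iff (min_mem_bits he₁ he₂) (min_mem_bits he₁ he₃)).1 hB
    rw [h p hp q hq r hr qr a pq pr b hqr ha hpq hpr hb, min_max_distrib_left]
  · intro h p hp q hq r hr qr a pq pr b hqr ha hpq hpr hb
    have hmem : ∀ {u}, u ∈ P → extFun u 0 ∈ extSet P :=
      fun hu => extFun_mem_extSet_iff.2 ⟨hu, zero_mem_bits⟩
    have := h _ (hmem hp) _ (hmem hq) _ (hmem hr) _ _ _ _ _
      hqr.extFun_zero ha.extFun_zero hpq.extFun_zero hpr.extFun_zero hb.extFun_zero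
    exact (extFun_inj.1 this).1

theorem isComplementedIn_extSet_iff :
    IsComplementedIn S P ↔ IsComplementedIn (Option S) (extSet P) := by
  constructor
  · intro h f hf
    obtain ⟨p, hp, e, he, rfl⟩ := mem_extSet_iff.1 hf
    obtain ⟨hinf, hsup⟩ := h p hp
    rw [one_sub_extFun, zero_eq_extFun, one_eq_extFun,
      isInfIn_extFun_iff he (one_sub_mem_bits he), isSupIn_extFun_iff he (one_sub_mem_bits he),
      min_one_sub_of_mem_bits he, max_one_sub_of_mem_bits he]
    exact ⟨⟨hinf, rfl⟩, ⟨hsup, rfl⟩⟩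
  · intro h p hp
    have h1 : (1 - 0 : ℝ) ∈ 𝔹 := by norm_num
    have := h _ (extFun_mem_extSet_iff.2 ⟨hp, zero_mem_bits⟩)
    rw [one_sub_extFun, zero_eq_extFun, one_eq_extFun,
      isInfIn_extFun_iff zero_mem_bits h1, isSupIn_extFun_iff zero_mem_bits h1] at this
    exact ⟨this.1.1, this.2.1⟩

theorem isBooleanAlg_extSet_iff (hP : IsAlg S P) :
    IsBooleanAlg S P ↔ IsBooleanAlg (Option S) (extSet P) :=
  and_congr (iff_of_true hP hP.extSet) <|
    and_congr hasInfSupIn_extSet_iff (and_congr isDistribIn_extSet_iff isComplementedIn_extSet_iff)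

end Extension

theorem stmt_4_general {S : Type*} {P : Set (S → ℝ)} (hP : IsAlg S P) :
    ((∀ p ∈ P, ∀ q ∈ P, (∃ m, IsInfIn S P p q m) ∧ (∃ j, IsSupIn S P p q j)) ↔
      (∀ p ∈ extSet P, ∀ q ∈ extSet P,
        (∃ m, IsInfIn (Option S) (extSet P) p q m) ∧
        (∃ j, IsSupIn (Option S) (extSet P) p q j))) ∧
    (IsBooleanAlg S P ↔ IsBooleanAlg (Option S) (extSet P)) :=
  ⟨hasInfSupIn_extSet_iff, isBooleanAlg_extSet_iff hP⟩

theorem stmt_4 {S : Type*} [Nonempty S] {P : Set (S → ℝ)} (hP : IsAlg S P) :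
    ((∀ p ∈ P, ∀ q ∈ P, (∃ m, IsInfIn S P p q m) ∧ (∃ j, IsSupIn S P p q j)) ↔
      (∀ p ∈ extSet P, ∀ q ∈ extSet P,
        (∃ m, IsInfIn (Option S) (extSet P) p q m) ∧
        (∃ j, IsSupIn (Option S) (extSet P) p q j))) ∧
    (IsBooleanAlg S P ↔ IsBooleanAlg (Option S) (extSet P)) :=
  stmt_4_general hP
end

section
/- Let P be an algebra of S-probabilities that is not a Boolean algebra of S-probabilities, and let q be a varying S-probability with q ∉ P. Suppose there exist p₁, p₂ ∈ P such that the four functions p₁, p₂, 1 − p₁, 1 − p₂ are pairwise distinct and every pair of distinct functions among them is reciprocal. Then q is not critical: there exists no Boolean algebra Q of S-probabilities with P ∪ {q} ⊆ Q. -/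
/-!
In a Boolean algebra `Q` of `S`-probabilities, an element `u ≤ 1/2` lies below its complement
`1 - u`, so `u ≤ u ⊓ (1 - u) = 0`. Hence two elements whose pointwise minimum is `≤ 1/2` meet
in `0`, and distributivity gives `p₁ = p₁ ⊓ (p₂ ⊔ (1 - p₂)) = (p₁ ⊓ p₂) ⊔ (p₁ ⊓ (1 - p₂)) = 0`.
Symmetrically `p₂ = 0`, contradicting `p₁ ≠ p₂`.
-/

theorem PRBelow.symm {S : Type*} {p q : S → ℝ} (h : PRBelow S p q) : PRBelow S q p :=
  fun s => by simpa only [min_comm] using h s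

theorem isSupIn_self {S : Type*} {Q : Set (S → ℝ)} {p : S → ℝ} (hp : p ∈ Q) :
    IsSupIn S Q p p p :=
  ⟨hp, le_rfl, le_rfl, fun _ _ h _ => h⟩

theorem IsAlg.isInfIn_one {S : Type*} {Q : Set (S → ℝ)} (hQ : IsAlg S Q) {x : S → ℝ}
    (hx : x ∈ Q) : IsInfIn S Q x 1 x :=
  ⟨hx, le_rfl, fun s => (hQ.1 x hx s).2, fun _ _ h _ => h⟩

namespace IsBooleanAlg

variable {S : Type*} {Q : Set (S → ℝ)}

theorem eq_zero_of_le_half (hQ : IsBooleanAlg S Q) {u : S → ℝ} (hu : u ∈ Q)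
    (hle : ∀ s, u s ≤ 1 / 2) : u = 0 := by
  have hcompl : u ≤ 1 - u := fun s => by
    simp only [Pi.sub_apply, Pi.one_apply]
    linarith [hle s]
  have hinf := (hQ.2.2.2 u hu).1
  exact le_antisymm (hinf.2.2.2 u hu le_rfl hcompl) hinf.2.1

theorem isInfIn_zero (hQ : IsBooleanAlg S Q) {x y : S → ℝ} (hx : x ∈ Q) (hy : y ∈ Q)
    (hxy : PRBelow S x y) : IsInfIn S Q x y 0 := by
  refine ⟨hQ.1.2.1, fun s => (hQ.1.1 x hx s).1, fun s => (hQ.1.1 y hy s).1, ?_⟩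
  intro u hu hux huy
  exact (hQ.eq_zero_of_le_half hu fun s => (le_min (hux s) (huy s)).trans (hxy s)).le

theorem eq_zero_of_prBelow (hQ : IsBooleanAlg S Q) {p r : S → ℝ} (hp : p ∈ Q) (hr : r ∈ Q)
    (hpr : PRBelow S p r) (hpr' : PRBelow S p (1 - r)) : p = 0 :=
  hQ.2.2.1 p hp r hr (1 - r) (hQ.1.2.2.1 r hr) 1 p 0 0 0
    (hQ.2.2.2 r hr).2 (hQ.1.isInfIn_one hp)
    (hQ.isInfIn_zero hp hr hpr) (hQ.isInfIn_zero hp (hQ.1.2.2.1 r hr) hpr')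
    (isSupIn_self hQ.1.2.1)

end IsBooleanAlg

theorem stmt_11_general {S : Type*} {P : Set (S → ℝ)}
    {q : S → ℝ}
    (hex : ∃ p1 ∈ P, ∃ p2 ∈ P,
      (p1 ≠ p2 ∧ p1 ≠ 1 - p1 ∧ p1 ≠ 1 - p2 ∧ p2 ≠ 1 - p1 ∧ p2 ≠ 1 - p2 ∧
        (1 - p1 : S → ℝ) ≠ 1 - p2) ∧
      (Reciprocal S p1 p2 ∧ Reciprocal S p1 (1 - p1) ∧ Reciprocal S p1 (1 - p2) ∧
       Reciprocal S p2 (1 - p1) ∧ Reciprocal S p2 (1 - p2) ∧ Reciprocal S (1 - p1) (1 - p2))) :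
    ¬∃ Q : Set (S → ℝ), IsBooleanAlg S Q ∧ P ∪ {q} ⊆ Q := by
  rintro ⟨Q, hQ, hPQ⟩
  obtain ⟨p1, hp1, p2, hp2, ⟨hne, -⟩, hr12, -, hr12', hr21', -⟩ := hex
  have hp1Q : p1 ∈ Q := hPQ (Or.inl hp1)
  have hp2Q : p2 ∈ Q := hPQ (Or.inl hp2)
  have hp1z : p1 = 0 := hQ.eq_zero_of_prBelow hp1Q hp2Q hr12.1 hr12'.1
  have hp2z : p2 = 0 := hQ.eq_zero_of_prBelow hp2Q hp1Q hr12.1.symm hr21'.1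
  exact hne (hp1z.trans hp2z.symm)

theorem stmt_11 {S : Type*} [Nonempty S] {P : Set (S → ℝ)} (hP : IsAlg S P)
    (hnB : ¬IsBooleanAlg S P)
    {q : S → ℝ} (hq : IsProb S q) (hqv : Varying S q) (hqn : q ∉ P)
    (hex : ∃ p1 ∈ P, ∃ p2 ∈ P,
      (p1 ≠ p2 ∧ p1 ≠ 1 - p1 ∧ p1 ≠ 1 - p2 ∧ p2 ≠ 1 - p1 ∧ p2 ≠ 1 - p2 ∧
        (1 - p1 : S → ℝ) ≠ 1 - p2) ∧
      (Reciprocal S p1 p2 ∧ Reciprocal S p1 (1 - p1) ∧ Reciprocal S p1 (1 - p2) ∧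
       Reciprocal S p2 (1 - p1) ∧ Reciprocal S p2 (1 - p2) ∧ Reciprocal S (1 - p1) (1 - p2))) :
    ¬∃ Q : Set (S → ℝ), IsBooleanAlg S Q ∧ P ∪ {q} ⊆ Q :=
  stmt_11_general hex
end

section
/- Let P be an algebra of S-probabilities that is not a Boolean algebra of S-probabilities, and let q be a varying S-probability with q ∉ P. Suppose there exist varying p₁, p₂, p₃ ∈ P such that the four functions p₁, p₂, p₃, q are pairwise partially reciprocal below 1/2 (i.e., any two distinct of them a, b satisfy min(a(s), b(s)) ≤ 1/2 for all s ∈ S), p₁ ≤ 1 − p₂, p₃ ≤ 1 − q, and p₁ + p₂ = p₃ + q. Then q is not critical: there exists no Boolean algebra Q of S-probabilities with P ∪ {q} ⊆ Q. -/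
/-!
In a Boolean algebra `Q` of `S`-probabilities the sum of two orthogonal elements is their
supremum, and an element bounded by `1/2` is `0`, being below its own complement. Hence
`p₃ + q` is the supremum of `p₃` and `q`, while `p₁ ⊓ p₃ = p₁ ⊓ q = 0` by partial reciprocity.
Since `p₁ ≤ p₁ + p₂ = p₃ + q`, distributivity gives `p₁ = p₁ ⊓ (p₃ ⊔ q) = 0 ⊔ 0 = 0`,
which contradicts `p₁` being varying.
-/

section

variable {S : Type*} {P : Set (S → ℝ)} {p r : S → ℝ}

namespace IsAlg

theorem add_mem (hP : IsAlg S P) (hp : p ∈ P) (hr : r ∈ P) (hpr : p ≤ 1 - r) :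
    p + r ∈ P := by
  have hr1 : r ≤ 1 - 0 := fun s => by simpa using (hP.1 r hr s).2
  have hp1 : (0 : S → ℝ) ≤ 1 - p := fun s => by simpa using (hP.1 p hp s).2
  simpa using hP.2.2.2 p r 0 hp hr hP.2.1 hpr hr1 hp1

theorem isSupIn_add (hP : IsAlg S P) (hp : p ∈ P) (hr : r ∈ P) (hpr : p ≤ 1 - r) :
    IsSupIn S P p r (p + r) := by
  refine ⟨hP.add_mem hp hr hpr, fun s => ?_, fun s => ?_, fun u hu hpu hru s => ?_⟩
  · simpa using (hP.1 r hr s).1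
  · simpa using (hP.1 p hp s).1
  · -- `p`, `r`, `1 - u` are pairwise orthogonal, so `p + r + (1 - u) ≤ 1`.
    have hr' : r ≤ 1 - (1 - u) := by simpa using hru
    have hu' : 1 - u ≤ 1 - p := fun s => by
      simp only [Pi.sub_apply, Pi.one_apply]
      linarith [hpu s]
    have hmem := hP.2.2.2 p r (1 - u) hp hr (hP.2.2.1 u hu) hpr hr' hu'
    have := (hP.1 _ hmem s).2
    simp only [Pi.add_apply, Pi.sub_apply, Pi.one_apply] at this ⊢
    linarith

end IsAlg

namespace IsBooleanAlg

theorem eq_zero_of_le_half_s13 (hQ : IsBooleanAlg S P) (hp : p ∈ P) (hhalf : ∀ s, p s ≤ 1 / 2) :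
    p = 0 := by
  have hnonneg := fun s => (hQ.1.1 p hp s).1
  have hle : p ≤ 1 - p := fun s => by
    simp only [Pi.sub_apply, Pi.one_apply]
    linarith [hhalf s]
  have hle0 := (hQ.2.2.2 p hp).1.2.2.2 p hp le_rfl hle
  exact funext fun s => le_antisymm (hle0 s) (hnonneg s)

theorem isInfIn_zero_of_prBelow (hQ : IsBooleanAlg S P) (hp : p ∈ P) (hr : r ∈ P)
    (hpr : PRBelow S p r) : IsInfIn S P p r 0 := by
  obtain ⟨m, hm, hmp, hmr, hmax⟩ := (hQ.2.1 p hp r hr).1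
  have hm0 : m = 0 :=
    hQ.eq_zero_of_le_half_s13 hm fun s => (le_min (hmp s) (hmr s)).trans (hpr s)
  exact hm0 ▸ ⟨hm, hmp, hmr, hmax⟩

theorem eq_zero_of_le_sup {q j : S → ℝ} (hQ : IsBooleanAlg S P) (hp : p ∈ P) (hq : q ∈ P)
    (hr : r ∈ P) (hj : IsSupIn S P q r j) (hpj : p ≤ j) (hpq : IsInfIn S P p q 0)
    (hpr : IsInfIn S P p r 0) : p = 0 :=
  hQ.2.2.1 p hp q hq r hr j p 0 0 0 hj ⟨hp, le_rfl, hpj, fun _ _ hu _ => hu⟩ hpq hpr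
    ⟨hQ.1.2.1, le_rfl, le_rfl, fun _ _ hu _ => hu⟩

end IsBooleanAlg

end

theorem stmt_13_general {S : Type*} {P : Set (S → ℝ)} {q : S → ℝ}
    (hex : ∃ p1 ∈ P, ∃ p2 ∈ P, ∃ p3 ∈ P,
      Varying S p1 ∧ Varying S p2 ∧ Varying S p3 ∧
      PRBelow S p1 p2 ∧ PRBelow S p1 p3 ∧ PRBelow S p1 q ∧
      PRBelow S p2 p3 ∧ PRBelow S p2 q ∧ PRBelow S p3 q ∧
      p1 ≤ 1 - p2 ∧ p3 ≤ 1 - q ∧ p1 + p2 = p3 + q) :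
    ¬∃ Q : Set (S → ℝ), IsBooleanAlg S Q ∧ P ∪ {q} ⊆ Q := by
  rintro ⟨Q, hQ, hsub⟩
  obtain ⟨p1, hp1, p2, hp2, p3, hp3, hv1, -, -, -, h13, h1q, -, -, -, -, h3q, hsum⟩ := hex
  have hp1Q : p1 ∈ Q := hsub (.inl hp1)
  have hp3Q : p3 ∈ Q := hsub (.inl hp3)
  have hqQ : q ∈ Q := hsub (.inr rfl)
  have hp1le : p1 ≤ p3 + q := fun s => by
    have := congrFun hsum s
    simp only [Pi.add_apply] at this ⊢
    linarith [(hQ.1.1 p2 (hsub (.inl hp2)) s).1]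
  have hp1_zero : p1 = 0 :=
    hQ.eq_zero_of_le_sup hp1Q hp3Q hqQ (hQ.1.isSupIn_add hp3Q hqQ h3q) hp1le
      (hQ.isInfIn_zero_of_prBelow hp1Q hp3Q h13) (hQ.isInfIn_zero_of_prBelow hp1Q hqQ h1q)
  exact hv1.1 fun s => by simp [hp1_zero]

theorem stmt_13 {S : Type*} [Nonempty S] {P : Set (S → ℝ)} (hP : IsAlg S P)
    (hnB : ¬IsBooleanAlg S P)
    {q : S → ℝ} (hq : IsProb S q) (hqv : Varying S q) (hqn : q ∉ P)
    (hex : ∃ p1 ∈ P, ∃ p2 ∈ P, ∃ p3 ∈ P,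
      Varying S p1 ∧ Varying S p2 ∧ Varying S p3 ∧
      PRBelow S p1 p2 ∧ PRBelow S p1 p3 ∧ PRBelow S p1 q ∧
      PRBelow S p2 p3 ∧ PRBelow S p2 q ∧ PRBelow S p3 q ∧
      p1 ≤ 1 - p2 ∧ p3 ≤ 1 - q ∧ p1 + p2 = p3 + q) :
    ¬∃ Q : Set (S → ℝ), IsBooleanAlg S Q ∧ P ∪ {q} ⊆ Q :=
  stmt_13_general hex
end
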